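/- For 2 ≤ p < ∞ and 1 < p' ≤ 2 with 1/p + 1/p' = 1, let f be a nonnegative unit vector in L^p(X,μ) and g a nonnegative unit vector in L^{p'}(X,μ). Then ∫ f g dμ ≤ 1 - (1/(p·2^{p-1})) ‖f - D_{p'}(g)‖_p^p, where D_{p'}(g) = g^{p'-1} is the duality map applied to g. -/

import Mathlib

/-!
For `p ≥ 2` the Bregman divergence of `t ↦ t ^ p / p`,
`a ^ p / p - c ^ p / p - c ^ (p - 1) * (a - c) = ∫ t in c..a, (t ^ (p - 1) - c ^ (p - 1))`,
dominates `|a - c| ^ p / p`, because `|t ^ (p - 1) - c ^ (p - 1)| ≥ |t - c| ^ (p - 1)` by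
superadditivity of `s ↦ s ^ (p - 1)`. Substituting `c = g ^ (p' - 1)` turns this into Young's
inequality `a * g ≤ a ^ p / p + g ^ p' / p'` with remainder `|a - g ^ (p' - 1)| ^ p / p`.
Integrating and using the unit norms gives the theorem, even with `1 / p` in place of
`1 / (p * 2 ^ (p - 1))`.
-/

open MeasureTheory

noncomputable def Lnorm {X : Type*} [MeasurableSpace X] (μ : Measure X) (p : ℝ) (f : X → ℝ) : ℝ :=
  (∫ x, |f x| ^ p ∂μ) ^ (1 / p)

namespace Real

lemma sub_rpow_le_rpow_sub_rpow {s t q : ℝ} (hs : 0 ≤ s) (hst : s ≤ t) (hq : 1 ≤ q) :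
    (t - s) ^ q ≤ t ^ q - s ^ q := by
  lift s to NNReal using hs
  lift t - s to NNReal using sub_nonneg.2 hst with d hd
  obtain rfl : t = s + d := by rw [hd]; ring
  rw [le_sub_iff_add_le']
  exact_mod_cast NNReal.add_rpow_le_rpow_add s d hq

end Real

namespace intervalIntegral

lemma integral_sub_const_rpow {c a q : ℝ} (hq : 0 ≤ q) :
    ∫ t in c..a, (t - c) ^ q = (a - c) ^ (q + 1) / (q + 1) := by
  rw [integral_comp_sub_right (· ^ q), integral_rpow (Or.inl (by linarith)),
    sub_self, Real.zero_rpow (by positivity), sub_zero]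

lemma integral_const_sub_rpow {c a q : ℝ} (hq : 0 ≤ q) :
    ∫ t in a..c, (c - t) ^ q = (c - a) ^ (q + 1) / (q + 1) := by
  rw [integral_comp_sub_left (· ^ q), integral_rpow (Or.inl (by linarith)),
    sub_self, Real.zero_rpow (by positivity), sub_zero]

lemma integral_rpow_sub_const {a b c q : ℝ} (hq : 0 ≤ q) :
    ∫ t in a..b, (t ^ q - c ^ q) = (b ^ (q + 1) - a ^ (q + 1)) / (q + 1) - c ^ q * (b - a) := by
  rw [integral_sub (intervalIntegrable_rpow' (by linarith)) intervalIntegrable_const,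
    integral_rpow (Or.inl (by linarith)), integral_const, smul_eq_mul, mul_comm]

end intervalIntegral

section Bregman

open intervalIntegral

variable {a c p : ℝ}

lemma sub_rpow_div_le_bregman_of_le (hp : 2 ≤ p) (hc : 0 ≤ c) (hca : c ≤ a) :
    (a - c) ^ p / p ≤ a ^ p / p - c ^ p / p - c ^ (p - 1) * (a - c) := by
  have hq : 1 ≤ p - 1 := by linarith
  have hmono : ∫ t in c..a, (t - c) ^ (p - 1) ≤ ∫ t in c..a, (t ^ (p - 1) - c ^ (p - 1)) :=
    integral_mono_on hca
      (by apply Continuous.intervalIntegrable; fun_prop (disch := linarith))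
      (by apply Continuous.intervalIntegrable; fun_prop (disch := linarith))
      fun t ht => Real.sub_rpow_le_rpow_sub_rpow hc ht.1 hq
  rw [integral_sub_const_rpow (by linarith), integral_rpow_sub_const (by linarith),
    sub_add_cancel] at hmono
  linarith [sub_div (a ^ p) (c ^ p) p]

lemma rsub_rpow_div_le_bregman_of_le (hp : 2 ≤ p) (ha : 0 ≤ a) (hac : a ≤ c) :
    (c - a) ^ p / p ≤ a ^ p / p - c ^ p / p - c ^ (p - 1) * (a - c) := by
  have hq : 1 ≤ p - 1 := by linarith
  have hmono : ∫ t in a..c, (c - t) ^ (p - 1) ≤ ∫ t in a..c, -(t ^ (p - 1) - c ^ (p - 1)) :=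
    integral_mono_on hac
      (by apply Continuous.intervalIntegrable; fun_prop (disch := linarith))
      (by apply Continuous.intervalIntegrable; fun_prop (disch := linarith))
      fun t ht =>
        (Real.sub_rpow_le_rpow_sub_rpow (ha.trans ht.1) ht.2 hq).trans_eq (neg_sub _ _).symm
  rw [integral_const_sub_rpow (by linarith), intervalIntegral.integral_neg,
    integral_rpow_sub_const (by linarith), sub_add_cancel] at hmono
  linarith [sub_div (c ^ p) (a ^ p) p]

lemma abs_sub_rpow_div_le_bregman (hp : 2 ≤ p) (ha : 0 ≤ a) (hc : 0 ≤ c) :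
    |a - c| ^ p / p ≤ a ^ p / p - c ^ p / p - c ^ (p - 1) * (a - c) := by
  rcases le_total c a with hca | hac
  · rw [abs_of_nonneg (sub_nonneg.2 hca)]
    exact sub_rpow_div_le_bregman_of_le hp hc hca
  · rw [abs_sub_comm, abs_of_nonneg (sub_nonneg.2 hac)]
    exact rsub_rpow_div_le_bregman_of_le hp ha hac

end Bregman

lemma Real.young_inequality_with_remainder {a b p q : ℝ} (ha : 0 ≤ a) (hb : 0 ≤ b) (hp : 2 ≤ p)
    (hpq : p.HolderConjugate q) :
    a * b + |a - b ^ (q - 1)| ^ p / p ≤ a ^ p / p + b ^ q / q := by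
  have hexp : (q - 1) * (p - 1) = 1 := by linear_combination hpq.mul_eq_add
  have hpow_sub_one : (b ^ (q - 1)) ^ (p - 1) = b := by
    rw [← Real.rpow_mul hb, hexp, Real.rpow_one]
  have hpow : (b ^ (q - 1)) ^ p = b ^ q := by
    rw [← Real.rpow_mul hb, hpq.symm.sub_one_mul_conj]
  have hmul : b * b ^ (q - 1) = b ^ q := by
    rw [← Real.rpow_one_add' hb (by simp [hpq.symm.ne_zero]), add_sub_cancel]
  have hbregman := abs_sub_rpow_div_le_bregman hp ha (Real.rpow_nonneg hb (q - 1))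
  rw [hpow_sub_one, hpow, mul_sub, hmul] at hbregman
  have hq : b ^ q / q = b ^ q - b ^ q / p := by
    rw [div_eq_mul_inv, div_eq_mul_inv, ← hpq.one_sub_inv]; ring
  linarith

section Lebesgue

variable {X : Type*} [MeasurableSpace X] {μ : Measure X} {p : ℝ} {f : X → ℝ}

lemma Lnorm_nonneg (μ : Measure X) (p : ℝ) (f : X → ℝ) : 0 ≤ Lnorm μ p f :=
  Real.rpow_nonneg (integral_nonneg fun x => by positivity) _

lemma Lnorm_rpow (hp : p ≠ 0) (f : X → ℝ) : Lnorm μ p f ^ p = ∫ x, |f x| ^ p ∂μ := by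
  rw [Lnorm, ← Real.rpow_mul (integral_nonneg fun x => by positivity), one_div_mul_cancel hp,
    Real.rpow_one]

lemma integral_rpow_eq_one_of_Lnorm_eq_one (hp : p ≠ 0) (hf0 : ∀ x, 0 ≤ f x)
    (hfn : Lnorm μ p f = 1) : ∫ x, f x ^ p ∂μ = 1 := by
  calc ∫ x, f x ^ p ∂μ = ∫ x, |f x| ^ p ∂μ := by simp only [abs_of_nonneg (hf0 _)]
    _ = 1 := by rw [← Lnorm_rpow hp, hfn, Real.one_rpow]

lemma MeasureTheory.MemLp.integrable_rpow_of_nonneg (hf : MemLp f (ENNReal.ofReal p) μ)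
    (hp : 0 < p) (hf0 : ∀ x, 0 ≤ f x) : Integrable (fun x => f x ^ p) μ := by
  have := hf.integrable_norm_rpow (by simpa using hp) ENNReal.ofReal_ne_top
  simpa only [ENNReal.toReal_ofReal hp.le, Real.norm_of_nonneg (hf0 _)] using this

lemma integral_add_le_of_add_le {u v w : X → ℝ} (hu0 : ∀ x, 0 ≤ u x) (hv0 : ∀ x, 0 ≤ v x)
    (huvw : ∀ x, u x + v x ≤ w x) (hw : Integrable w μ) (hu : AEStronglyMeasurable u μ)
    (hv : AEStronglyMeasurable v μ) : ∫ x, u x ∂μ + ∫ x, v x ∂μ ≤ ∫ x, w x ∂μ := by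
  have hu_int : Integrable u μ := hw.mono' hu <| .of_forall fun x => by
    rw [Real.norm_of_nonneg (hu0 x)]; linarith [huvw x, hv0 x]
  have hv_int : Integrable v μ := hw.mono' hv <| .of_forall fun x => by
    rw [Real.norm_of_nonneg (hv0 x)]; linarith [huvw x, hu0 x]
  rw [← integral_add hu_int hv_int]
  exact integral_mono (hu_int.add hv_int) hw huvw

end Lebesgue

theorem stmt1_general {X : Type*} [MeasurableSpace X] (μ : Measure X) (p p' : ℝ)
    (hp : 2 ≤ p) (hp' : 1 < p') (hpp' : 1 / p + 1 / p' = 1)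
    (f g : X → ℝ) (hf0 : ∀ x, 0 ≤ f x) (hg0 : ∀ x, 0 ≤ g x)
    (hf : MemLp f (ENNReal.ofReal p) μ) (hg : MemLp g (ENNReal.ofReal p') μ)
    (hfn : Lnorm μ p f = 1) (hgn : Lnorm μ p' g = 1) :
    ∫ x, f x * g x ∂μ ≤
      1 - 1 / (p * 2 ^ (p - 1)) * (Lnorm μ p (fun x => f x - g x ^ (p' - 1))) ^ p := by
  have hpp : p.HolderConjugate p' :=
    (Real.holderConjugate_iff.2 ⟨hp', by simpa only [one_div, add_comm] using hpp'⟩).symm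
  have hp0 : 0 < p := hpp.pos
  have hfm := hf.aestronglyMeasurable
  have hgm := hg.aestronglyMeasurable
  have hfp := (hf.integrable_rpow_of_nonneg hp0 hf0).div_const p
  have hgp := (hg.integrable_rpow_of_nonneg hpp.symm.pos hg0).div_const p'
  have hyoung := integral_add_le_of_add_le (μ := μ)
    (fun x => mul_nonneg (hf0 x) (hg0 x)) (fun x => by positivity)
    (fun x => Real.young_inequality_with_remainder (hf0 x) (hg0 x) hp hpp) (hfp.add hgp)
    (hfm.mul hgm) (by fun_prop (disch := linarith))
  rw [integral_add hfp hgp, integral_div, integral_div, integral_div, ← Lnorm_rpow hp0.ne',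
    integral_rpow_eq_one_of_Lnorm_eq_one hp0.ne' hf0 hfn,
    integral_rpow_eq_one_of_Lnorm_eq_one hpp.symm.ne_zero hg0 hgn] at hyoung
  have hweaker : 1 / (p * 2 ^ (p - 1)) * Lnorm μ p (fun x => f x - g x ^ (p' - 1)) ^ p
      ≤ Lnorm μ p (fun x => f x - g x ^ (p' - 1)) ^ p / p := by
    rw [one_div_mul_eq_div]
    exact div_le_div_of_nonneg_left (Real.rpow_nonneg (Lnorm_nonneg _ _ _) _) hp0
      (le_mul_of_one_le_right hp0.le (Real.one_le_rpow (by norm_num) (by linarith)))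
  linarith

/-- Hölder's inequality with remainder (eq. (main2)): for `2 ≤ p < ∞`, `1 < p' ≤ 2`,
`1/p + 1/p' = 1`, nonnegative unit vectors `f ∈ L^p`, `g ∈ L^{p'}`,
`∫ f g ≤ 1 - (1/(p 2^{p-1})) ‖f - D_{p'}(g)‖_p^p` where `D_{p'}(g) = g^{p'-1}`. -/
theorem stmt1 {X : Type*} [MeasurableSpace X] (μ : Measure X) (p p' : ℝ)
    (hp : 2 ≤ p) (hp' : 1 < p') (hp'2 : p' ≤ 2) (hpp' : 1 / p + 1 / p' = 1)
    (f g : X → ℝ) (hf0 : ∀ x, 0 ≤ f x) (hg0 : ∀ x, 0 ≤ g x)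
    (hf : MemLp f (ENNReal.ofReal p) μ) (hg : MemLp g (ENNReal.ofReal p') μ)
    (hfn : Lnorm μ p f = 1) (hgn : Lnorm μ p' g = 1) :
    ∫ x, f x * g x ∂μ ≤
      1 - 1 / (p * 2 ^ (p - 1)) * (Lnorm μ p (fun x => f x - g x ^ (p' - 1))) ^ p :=
  stmt1_general μ p p' hp hp' hpp' f g hf0 hg0 hf hg hfn hgn
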